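/- arXiv:2112.01862 — 2 statements merged into one kernel-verified Lean document; each statement's English description precedes it below -/
import Mathlib

section
/- Let Φ : ℤ → ℂ^{1×J} be a deterministic characteristic with Σ_{k∈ℤ} ‖Φ(k)‖ ρ^{-k} < ∞, and let Z_n^Φ := Σ_{k=-∞}^{n} Φ(k) Z_{n-k} be the branching process counted with characteristic Φ. If Z_n/ρ^n → W u almost surely (Kesten–Stigum), then ρ^{-n} Z_n^Φ → W · (Σ_{k∈ℤ} Φ(k) ρ^{-k}) u almost surely as n → ∞. -/
/-!
Along each Kesten–Stigum path, `ρ^{-n} Z_n^Φ = Σ_k (ρ^{-k} Φ(k)) · (ρ^{-(n-k)} Z_{n-k})` is the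
convolution of the summable kernel `ρ^{-k} Φ(k)` with the convergent, hence bounded, sequence
`ρ^{-m} Z_m` (extended by `0` to `m < 0`). Tannery's theorem (dominated convergence for series)
lets the limit `W u` pass through the sum term by term.
-/

open MeasureTheory Filter

noncomputable section

/-- Euclidean (Hilbert–Schmidt) norm of a row vector. -/
def frobV {J : ℕ} (v : Fin J → ℂ) : ℝ := Real.sqrt (∑ j, ‖v j‖ ^ 2)

open Function Matrix Topology

lemma norm_le_frobV {J : ℕ} (v : Fin J → ℂ) : ‖v‖ ≤ frobV v := by
  refine (pi_norm_le_iff_of_nonneg (Real.sqrt_nonneg _)).2 fun j => ?_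
  rw [← Real.sqrt_sq (norm_nonneg (v j))]
  exact Real.sqrt_le_sqrt
    (Finset.single_le_sum (f := fun i => ‖v i‖ ^ 2) (fun i _ => sq_nonneg _) (Finset.mem_univ j))

lemma tsum_int_eq_tsum_nat_sub {G : Type*} [AddCommMonoid G] [TopologicalSpace G]
    {g : ℤ → G} {n : ℤ} (hg : ∀ k, n < k → g k = 0) : ∑' k, g k = ∑' m : ℕ, g (n - m) := by
  refine (Injective.tsum_eq (g := fun m : ℕ => n - m) (fun a b h => by simpa using h)
    fun k hk => ⟨(n - k).toNat, ?_⟩).symm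
  have : k ≤ n := not_lt.1 fun h => hk (hg k h)
  simp only
  omega

lemma extend_natCast_of_neg {E : Type*} (x : ℕ → E) (e : ℤ → E) {t : ℤ} (ht : t < 0) :
    extend ((↑) : ℕ → ℤ) x e t = e t :=
  extend_apply' _ _ _ fun ⟨m, hm⟩ => by omega

lemma Filter.Tendsto.extend_natCast {E : Type*} {x : ℕ → E} {l : Filter E}
    (hx : Tendsto x atTop l) (e : ℤ → E) : Tendsto (extend ((↑) : ℕ → ℤ) x e) atTop l := by
  refine (hx.comp (tendsto_atTop_atTop.2 fun m => ⟨(m : ℤ), fun t ht => by omega⟩ :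
    Tendsto Int.toNat atTop atTop)).congr' ?_
  filter_upwards [eventually_ge_atTop 0] with t ht
  conv_rhs => rw [← Int.toNat_of_nonneg ht]
  exact (Nat.cast_injective.extend_apply x e t.toNat).symm

section

variable {ι R : Type*} [Fintype ι] [NormedRing R]

lemma norm_dotProduct_le (a y : ι → R) : ‖a ⬝ᵥ y‖ ≤ Fintype.card ι * (‖a‖ * ‖y‖) := by
  calc ‖a ⬝ᵥ y‖ ≤ ∑ i, ‖a i * y i‖ := norm_sum_le _ _
    _ ≤ ∑ _i : ι, ‖a‖ * ‖y‖ := Finset.sum_le_sum fun i _ =>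
        (norm_mul_le _ _).trans (mul_le_mul (norm_le_pi_norm a i) (norm_le_pi_norm y i)
          (norm_nonneg _) (norm_nonneg _))
    _ = Fintype.card ι * (‖a‖ * ‖y‖) := by simp

theorem tendsto_tsum_dotProduct_extend_sub [CompleteSpace R] {a : ℤ → ι → R}
    (ha : Summable fun k => ‖a k‖) {x : ℕ → ι → R} {L : ι → R} (hx : Tendsto x atTop (𝓝 L)) :
    Tendsto (fun n : ℕ => ∑' k, a k ⬝ᵥ extend ((↑) : ℕ → ℤ) x 0 (n - k)) atTop
      (𝓝 (∑' k, a k ⬝ᵥ L)) := by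
  obtain ⟨C, hC⟩ := hx.norm.bddAbove_range
  have hC0 : 0 ≤ C := (norm_nonneg _).trans (hC ⟨0, rfl⟩)
  have hext : ∀ t, ‖extend ((↑) : ℕ → ℤ) x 0 t‖ ≤ C := fun t => by
    rcases lt_or_ge t 0 with ht | ht
    · simpa [extend_natCast_of_neg x 0 ht] using hC0
    · lift t to ℕ using ht
      rw [Nat.cast_injective.extend_apply]
      exact hC ⟨t, rfl⟩
  refine tendsto_tsum_of_dominated_convergence ((ha.mul_right C).mul_left (Fintype.card ι : ℝ))
    (fun k => ?_) (.of_forall fun n k => ?_)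
  · have hshift : Tendsto (fun n : ℕ => (n : ℤ) - k) atTop atTop :=
      tendsto_atTop_add_const_right _ (-k) tendsto_natCast_atTop_atTop
    exact ((continuous_const.dotProduct continuous_id).tendsto L).comp
      ((hx.extend_natCast 0).comp hshift)
  · exact (norm_dotProduct_le _ _).trans (by gcongr; exact hext _)

end

lemma zpow_neg_sub_mul_inv_pow {K : Type*} [Field K] {r : K} (hr : r ≠ 0) (n m : ℕ) :
    r ^ (-((n : ℤ) - m)) * (r ^ m)⁻¹ = (r ^ n)⁻¹ := by
  rw [neg_sub, zpow_sub₀ hr, zpow_natCast, zpow_natCast]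
  field_simp

lemma tsum_dotProduct_sub_div_pow {ι K : Type*} [Fintype ι] [Field K] [TopologicalSpace K]
    [IsTopologicalDivisionRing K] [T2Space K] {r : K} (hr : r ≠ 0) (Φ : ℤ → ι → K)
    (z : ℕ → ι → K) (n : ℕ) :
    (∑' m : ℕ, Φ (n - m) ⬝ᵥ z m) / r ^ n =
      ∑' k, (r ^ (-k) • Φ k) ⬝ᵥ extend ((↑) : ℕ → ℤ) (fun m => (r ^ m)⁻¹ • z m) 0 (n - k) := by
  rw [tsum_int_eq_tsum_nat_sub (n := n) fun k hk => by
    rw [extend_natCast_of_neg _ _ (by omega), Pi.zero_apply, dotProduct_zero], ← tsum_div_const]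
  refine tsum_congr fun m => ?_
  rw [sub_sub_cancel, Nat.cast_injective.extend_apply, smul_dotProduct, dotProduct_smul, smul_smul,
    zpow_neg_sub_mul_inv_pow hr, smul_eq_mul, div_eq_inv_mul]

theorem lln_deterministic_characteristic_general
    {J : ℕ} {Ω : Type*} [MeasurableSpace Ω] (μ : Measure Ω)
    (Z : ℕ → Ω → Fin J → ℕ) (ρ : ℝ) (uvec : Fin J → ℝ) (W : Ω → ℝ)
    (hρ : 1 < ρ)
    (hKS : ∀ᵐ ω ∂μ, Tendsto (fun n => fun j => (Z n ω j : ℝ) / ρ ^ n) atTop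
      (nhds fun j => W ω * uvec j))
    (Φ : ℤ → Fin J → ℂ)
    (hΦ : Summable fun k : ℤ => frobV (Φ k) * ρ ^ (-k))
    (ZΦ : ℕ → Ω → ℂ)
    (hZΦ : ∀ n ω, ZΦ n ω = ∑' m : ℕ, ∑ j, Φ ((n : ℤ) - m) j * (Z m ω j : ℂ)) :
    ∀ᵐ ω ∂μ, Tendsto (fun n : ℕ => ZΦ n ω / (ρ : ℂ) ^ n) atTop
      (nhds ((W ω : ℂ) * ∑' k : ℤ, (∑ j, Φ k j * (uvec j : ℂ)) * (ρ : ℂ) ^ (-k))) := by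
  have hρ0 : 0 < ρ := zero_lt_one.trans hρ
  have hρ' : (ρ : ℂ) ≠ 0 := Complex.ofReal_ne_zero.2 hρ0.ne'
  have ha : Summable fun k : ℤ => ‖(ρ : ℂ) ^ (-k) • Φ k‖ := by
    refine hΦ.of_nonneg_of_le (fun _ => norm_nonneg _) fun k => ?_
    rw [norm_smul, norm_zpow, Complex.norm_real, Real.norm_of_nonneg hρ0.le, mul_comm]
    exact mul_le_mul_of_nonneg_right (norm_le_frobV _) (zpow_pos hρ0 _).le
  filter_upwards [hKS] with ω hω
  have hx : Tendsto (fun m => ((ρ : ℂ) ^ m)⁻¹ • fun j => (Z m ω j : ℂ)) atTop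
      (𝓝 ((W ω : ℂ) • fun j => (uvec j : ℂ))) := by
    convert ((continuous_pi fun j => Complex.continuous_ofReal.comp (continuous_apply j)).tendsto
      _).comp hω using 2
    · ext m
      simp [div_eq_inv_mul]
    · ext j
      simp
  have hlim : ∑' k : ℤ, ((ρ : ℂ) ^ (-k) • Φ k) ⬝ᵥ ((W ω : ℂ) • fun j => (uvec j : ℂ))
      = (W ω : ℂ) * ∑' k : ℤ, (∑ j, Φ k j * (uvec j : ℂ)) * (ρ : ℂ) ^ (-k) := by
    simp only [smul_dotProduct, dotProduct_smul, smul_eq_mul, ← tsum_mul_left]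
    exact tsum_congr fun k => by simp only [dotProduct]; ring
  rw [← hlim]
  refine (tendsto_tsum_dotProduct_extend_sub ha hx).congr fun n => ?_
  rw [hZΦ]
  exact (tsum_dotProduct_sub_div_pow hρ' Φ _ n).symm

/-- law of large numbers for a deterministic characteristic.  If
`Σ_{k∈ℤ} ‖Φ(k)‖ρ^{-k} < ∞` and `ρ^{-n} Z_n → W u` a.s. (Kesten–Stigum), then
`ρ^{-n} Z_n^Φ → W (Σ_{k∈ℤ} Φ(k) ρ^{-k}) u` a.s., where
`Z_n^Φ = Σ_{k ≤ n} Φ(k) Z_{n-k}`. -/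
theorem lln_deterministic_characteristic
    {J : ℕ} {Ω : Type*} [MeasurableSpace Ω] (μ : Measure Ω) [IsProbabilityMeasure μ]
    (Z : ℕ → Ω → Fin J → ℕ) (ρ : ℝ) (uvec : Fin J → ℝ) (W : Ω → ℝ)
    (hρ : 1 < ρ)
    (hKS : ∀ᵐ ω ∂μ, Tendsto (fun n => fun j => (Z n ω j : ℝ) / ρ ^ n) atTop
      (nhds fun j => W ω * uvec j))
    (Φ : ℤ → Fin J → ℂ)
    (hΦ : Summable fun k : ℤ => frobV (Φ k) * ρ ^ (-k))
    (ZΦ : ℕ → Ω → ℂ)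
    (hZΦ : ∀ n ω, ZΦ n ω = ∑' m : ℕ, ∑ j, Φ ((n : ℤ) - m) j * (Z m ω j : ℂ)) :
    ∀ᵐ ω ∂μ, Tendsto (fun n : ℕ => ZΦ n ω / (ρ : ℂ) ^ n) atTop
      (nhds ((W ω : ℂ) * ∑' k : ℤ, (∑ j, Φ k j * (uvec j : ℂ)) * (ρ : ℂ) ^ (-k))) :=
  lln_deterministic_characteristic_general μ Z ρ uvec W hρ hKS Φ hΦ ZΦ hZΦ

end
end

section
/- Let Φ : ℤ → ℂ^{d×J} be deterministic with Σ_{k≥0} ‖Φ(−k)‖ρ^k < ∞, suppose E[‖L‖²] < ∞ and Σ_{k∈ℤ} ‖E[Z_k^Φ | Z_0 = e_j]‖² ρ^{-k} < ∞ for every initial type j. Then the star characteristic Φ*(k) = Σ_{l≥0} Φ(k−1−l)A^l(L−A) satisfies Σ_{k∈ℤ} E[‖Φ*(k)‖²] ρ^{-k} < ∞. -/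
/-!
The geometric bound on `A ^ l` together with the summability of `Φ(-k) ρ^k` makes every series
`Σ_l Φ(n - l) A^l` converge absolutely, so the `l`-sum defining `Φ*(k)` can be pulled through the
finite sum over types: `Φ*(k) = M_{k-1} (L - A)`, where column `i` of `M_n` is
`E[Z_n^Φ | Z_0 = e_i]`. Submultiplicativity of the Frobenius norm and `E‖L - A‖² < ∞` give
`E‖Φ*(k)‖² ≤ K ‖M_{k-1}‖²`, and summing against `ρ^{-k}` is the moment hypothesis shifted by one.
-/

open MeasureTheory Filter

noncomputable section

def frobM {d J : ℕ} (M : Fin d → Fin J → ℂ) : ℝ :=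
  Real.sqrt (∑ a, ∑ j, ‖M a j‖ ^ 2)

open scoped Matrix.Norms.Frobenius

theorem Matrix.frobenius_norm_sq_eq {m n α : Type*} [Fintype m] [Fintype n]
    [SeminormedAddCommGroup α] (A : Matrix m n α) :
    ‖A‖ ^ 2 = ∑ i, ∑ j, ‖A i j‖ ^ 2 := by
  rw [Matrix.frobenius_norm_def, ← Real.rpow_natCast, ← Real.rpow_mul (by positivity)]
  norm_num

theorem frobM_eq_norm {d J : ℕ} (M : Matrix (Fin d) (Fin J) ℂ) : frobM M = ‖M‖ := by
  unfold frobM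
  rw [← Matrix.frobenius_norm_sq_eq, Real.sqrt_sq (norm_nonneg M)]

theorem norm_entry_le_frobM {d J : ℕ} (M : Fin d → Fin J → ℂ) (a : Fin d) (j : Fin J) :
    ‖M a j‖ ≤ frobM M := by
  refine Real.le_sqrt_of_sq_le ?_
  calc ‖M a j‖ ^ 2 ≤ ∑ j', ‖M a j'‖ ^ 2 :=
        Finset.single_le_sum (f := fun j' => ‖M a j'‖ ^ 2) (fun _ _ => by positivity)
          (Finset.mem_univ j)
    _ ≤ ∑ a', ∑ j', ‖M a' j'‖ ^ 2 :=
        Finset.single_le_sum (f := fun a' => ∑ j', ‖M a' j'‖ ^ 2) (fun _ _ => by positivity)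
          (Finset.mem_univ a)

theorem norm_sub_sq_le {E : Type*} [SeminormedAddCommGroup E] (x y : E) :
    ‖x - y‖ ^ 2 ≤ 2 * ‖x‖ ^ 2 + 2 * ‖y‖ ^ 2 := by
  have := pow_le_pow_left₀ (norm_nonneg _) (norm_sub_le x y) 2
  nlinarith [sq_nonneg (‖x‖ - ‖y‖)]

theorem summable_comp_sub_mul_pow {f : ℤ → ℝ} {ρ : ℝ} (hρ : ρ ≠ 0)
    (hf : Summable fun k : ℕ => f (-k) * ρ ^ k) (n : ℤ) :
    Summable fun l : ℕ => f (n - l) * ρ ^ l := by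
  -- shifting by `t` makes the argument nonpositive, `-(l + s)`
  set t := n.toNat
  set s := (t - n).toNat
  have hst : (s : ℤ) = t - n := Int.toNat_of_nonneg (by linarith [Int.self_le_toNat n])
  rw [← summable_nat_add_iff t]
  refine (((summable_nat_add_iff s).mpr hf).mul_right (ρ ^ t / ρ ^ s)).congr fun l => ?_
  have harg : n - ((l + t : ℕ) : ℤ) = -((l + s : ℕ) : ℤ) := by push_cast; omega
  rw [harg, pow_add, pow_add]
  field_simp

theorem summable_entry_mul_pow_entry {d J : ℕ} {F : ℕ → Fin d → Fin J → ℂ}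
    {A : Matrix (Fin J) (Fin J) ℝ} {ρ C : ℝ} (hA : ∀ l : ℕ, ∀ i j, |(A ^ l) i j| ≤ C * ρ ^ l)
    (hF : Summable fun l => frobM (F l) * ρ ^ l) (a : Fin d) (i j : Fin J) :
    Summable fun l => F l a i * (((A ^ l) i j : ℝ) : ℂ) := by
  refine Summable.of_norm_bounded (hF.mul_right C) fun l => ?_
  rw [norm_mul, Complex.norm_real, Real.norm_eq_abs, mul_right_comm, mul_assoc]
  exact mul_le_mul (norm_entry_le_frobM _ _ _) (hA l i j) (abs_nonneg _)
    (Real.sqrt_nonneg _)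

theorem summable_comp_sub_mul_zpow {g : ℤ → ℝ} {ρ : ℝ} (hρ : ρ ≠ 0)
    (hg : Summable fun k => g k * ρ ^ (-k)) (n : ℤ) :
    Summable fun k => g (k - n) * ρ ^ (-k) := by
  refine ((hg.comp_injective (sub_left_injective (b := n))).mul_right (ρ ^ (-n))).congr
    fun k => ?_
  simp only [Function.comp_apply, mul_assoc, ← zpow_add₀ hρ]
  ring_nf

theorem tsum_sum_mul_eq_mul_apply {J d : ℕ} {A : Matrix (Fin J) (Fin J) ℝ} {ρ C : ℝ}
    (hρ : ρ ≠ 0) (hA : ∀ l : ℕ, ∀ i j, |(A ^ l) i j| ≤ C * ρ ^ l) {Φ : ℤ → Fin d → Fin J → ℂ}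
    (hΦ : Summable fun k : ℕ => frobM (Φ (-(k : ℤ))) * ρ ^ k) {m : Fin J → ℤ → Fin d → ℂ}
    (hm : ∀ j k a, m j k a = ∑' l : ℕ, ∑ i, Φ (k - l) a i * (((A ^ l) i j : ℝ) : ℂ))
    (B : Matrix (Fin J) (Fin J) ℂ) (n : ℤ) (a : Fin d) (j : Fin J) :
    ∑' l : ℕ, ∑ i, (∑ i', Φ (n - l) a i' * (((A ^ l) i' i : ℝ) : ℂ)) * B i j =
      (Matrix.of (fun a i => m i n a) * B) a j := by
  have hsummable : ∀ i, Summable fun l : ℕ => ∑ i', Φ (n - l) a i' * (((A ^ l) i' i : ℝ) : ℂ) :=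
    fun i => summable_sum fun i' _ => summable_entry_mul_pow_entry hA
      (summable_comp_sub_mul_pow (f := fun k => frobM (Φ k)) hρ hΦ n) a i' i
  rw [Matrix.mul_apply, Summable.tsum_finsetSum fun i _ => (hsummable i).mul_right _]
  simp only [Matrix.of_apply, hm, tsum_mul_right]

theorem summable_frobenius_sq_mul_zpow {J d : ℕ} {m : Fin J → ℤ → Fin d → ℂ} {ρ : ℝ}
    (hm : ∀ j, Summable fun k : ℤ => (∑ a, ‖m j k a‖ ^ 2) * ρ ^ (-k)) :
    Summable fun k => ‖Matrix.of (fun a i => m i k a)‖ ^ 2 * ρ ^ (-k) := by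
  simp only [Matrix.frobenius_norm_sq_eq, Matrix.of_apply]
  simp only [Finset.sum_comm (γ := Fin d), Finset.sum_mul]
  exact summable_sum fun i _ => by simpa only [Finset.sum_mul] using hm i

theorem norm_map_ofReal_sub_sq_le {J : ℕ} (B A : Matrix (Fin J) (Fin J) ℝ) :
    ‖(B - A).map ((↑) : ℝ → ℂ)‖ ^ 2 ≤ 2 * ∑ i, ∑ j, B i j ^ 2 + 2 * ‖A‖ ^ 2 := by
  have hB : ‖B‖ ^ 2 = ∑ i, ∑ j, B i j ^ 2 := by
    simp only [Matrix.frobenius_norm_sq_eq, Real.norm_eq_abs, sq_abs]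
  rw [Matrix.frobenius_norm_map_eq _ _ Complex.norm_real, ← hB]
  exact norm_sub_sq_le B A

theorem integral_frobM_mul_sq_le {Ω : Type*} [MeasurableSpace Ω] {μ : Measure Ω} {d J : ℕ}
    (M : Matrix (Fin d) (Fin J) ℂ) {N : Ω → Matrix (Fin J) (Fin J) ℂ} {G : Ω → ℝ}
    (hG : Integrable G μ) (hNG : ∀ ω, ‖N ω‖ ^ 2 ≤ G ω) :
    ∫ ω, frobM (M * N ω) ^ 2 ∂μ ≤ ‖M‖ ^ 2 * ∫ ω, G ω ∂μ := by
  rw [← integral_const_mul]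
  refine integral_mono_of_nonneg (.of_forall fun _ => sq_nonneg _) (hG.const_mul _)
    (.of_forall fun ω => ?_)
  calc frobM (M * N ω) ^ 2 ≤ (‖M‖ * ‖N ω‖) ^ 2 := by
        rw [frobM_eq_norm]; gcongr; exact Matrix.frobenius_norm_mul _ _
    _ ≤ ‖M‖ ^ 2 * G ω := by rw [mul_pow]; gcongr; exact hNG ω

theorem star_characteristic_second_moment_general
    {J d : ℕ} {Ω : Type*} [MeasurableSpace Ω] (μ : Measure Ω) [IsProbabilityMeasure μ]
    (L : Ω → Fin J → Fin J → ℝ)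
    (hL2 : ∀ i j, Integrable (fun ω => (L ω i j) ^ 2) μ)
    (A : Matrix (Fin J) (Fin J) ℝ) (ρ : ℝ)
    (hρ : 1 < ρ)
    (hAg : ∃ C : ℝ, ∀ l : ℕ, ∀ i j, |(A ^ l) i j| ≤ C * ρ ^ l)
    (Φ : ℤ → Fin d → Fin J → ℂ)
    (hΦ : Summable fun k : ℕ => frobM (Φ (-(k : ℤ))) * ρ ^ k)
    (m : Fin J → ℤ → Fin d → ℂ)
    (hm : ∀ j k a, m j k a = ∑' l : ℕ, ∑ i, Φ (k - l) a i * (((A ^ l) i j : ℝ) : ℂ))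
    (hmoment : ∀ j, Summable fun k : ℤ =>
      (∑ a, ‖m j k a‖ ^ 2) * ρ ^ (-k))
    (Φstar : ℤ → Ω → Fin d → Fin J → ℂ)
    (hΦstar : ∀ k ω a j, Φstar k ω a j =
      ∑' l : ℕ, ∑ i, (∑ i', Φ (k - 1 - l) a i' * (((A ^ l) i' i : ℝ) : ℂ)) *
        (((L ω i j : ℝ) : ℂ) - ((A i j : ℝ) : ℂ))) :
    Summable fun k : ℤ => (∫ ω, frobM (Φstar k ω) ^ 2 ∂μ) * ρ ^ (-k) := by
  obtain ⟨C, hC⟩ := hAg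
  have hρ0 : 0 < ρ := by linarith
  let M : ℤ → Matrix (Fin d) (Fin J) ℂ := fun k => Matrix.of fun a i => m i k a
  let G : Ω → ℝ := fun ω => 2 * ∑ i, ∑ j, L ω i j ^ 2 + 2 * ‖A‖ ^ 2
  have hG : Integrable G μ :=
    ((integrable_finsetSum _ fun i _ => integrable_finsetSum _ fun j _ => hL2 i j).const_mul 2).add
      (integrable_const _)
  let N : Ω → Matrix (Fin J) (Fin J) ℂ := fun ω => (Matrix.of (L ω) - A).map (↑)
  have hΦstar_mul : ∀ k ω, Φstar k ω = M (k - 1) * N ω := by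
    intro k ω
    ext a j
    rw [hΦstar, ← tsum_sum_mul_eq_mul_apply hρ0.ne' hC hΦ hm]
    simp only [N, Matrix.map_apply, Matrix.sub_apply, Matrix.of_apply, Complex.ofReal_sub]
  have hintegral : ∀ k, ∫ ω, frobM (Φstar k ω) ^ 2 ∂μ ≤ ‖M (k - 1)‖ ^ 2 * ∫ ω, G ω ∂μ := by
    intro k
    simp only [hΦstar_mul]
    exact integral_frobM_mul_sq_le _ hG fun ω => norm_map_ofReal_sub_sq_le _ A
  refine Summable.of_nonneg_of_le (fun k => ?_) (fun k => ?_)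
    ((summable_comp_sub_mul_zpow hρ0.ne' (summable_frobenius_sq_mul_zpow hmoment) 1).mul_right
      (∫ ω, G ω ∂μ))
  · exact mul_nonneg (integral_nonneg fun ω => sq_nonneg _) (zpow_nonneg hρ0.le _)
  · rw [mul_right_comm]
    exact mul_le_mul_of_nonneg_right (hintegral k) (zpow_nonneg hρ0.le _)

/-- if moreover `E[‖L‖²] < ∞` and
`Σ_{k∈ℤ} ‖E[Z_k^Φ | Z_0 = e_j]‖² ρ^{-k} < ∞` for every initial type `j`
(where `E[Z_k^Φ | Z_0 = e_j] = Σ_{l≥0} Φ(k-l) A^l e_j`), then the star characteristic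
`Φ*(k) = Σ_{l≥0} Φ(k-1-l)A^l(L-A)` satisfies `Σ_{k∈ℤ} E[‖Φ*(k)‖²] ρ^{-k} < ∞`. -/
theorem star_characteristic_second_moment
    {J d : ℕ} {Ω : Type*} [MeasurableSpace Ω] (μ : Measure Ω) [IsProbabilityMeasure μ]
    (L : Ω → Fin J → Fin J → ℝ)
    (hLmeas : Measurable L)
    (hL2 : ∀ i j, Integrable (fun ω => (L ω i j) ^ 2) μ)
    (A : Matrix (Fin J) (Fin J) ℝ) (ρ : ℝ)
    (hA : ∀ i j, ∫ ω, L ω i j ∂μ = A i j)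
    (hρ : 1 < ρ)
    (hAg : ∃ C : ℝ, ∀ l : ℕ, ∀ i j, |(A ^ l) i j| ≤ C * ρ ^ l)
    (Φ : ℤ → Fin d → Fin J → ℂ)
    (hΦ : Summable fun k : ℕ => frobM (Φ (-(k : ℤ))) * ρ ^ k)
    (m : Fin J → ℤ → Fin d → ℂ)
    (hm : ∀ j k a, m j k a = ∑' l : ℕ, ∑ i, Φ (k - l) a i * (((A ^ l) i j : ℝ) : ℂ))
    (hmoment : ∀ j, Summable fun k : ℤ =>
      (∑ a, ‖m j k a‖ ^ 2) * ρ ^ (-k))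
    (Φstar : ℤ → Ω → Fin d → Fin J → ℂ)
    (hΦstar : ∀ k ω a j, Φstar k ω a j =
      ∑' l : ℕ, ∑ i, (∑ i', Φ (k - 1 - l) a i' * (((A ^ l) i' i : ℝ) : ℂ)) *
        (((L ω i j : ℝ) : ℂ) - ((A i j : ℝ) : ℂ))) :
    Summable fun k : ℤ => (∫ ω, frobM (Φstar k ω) ^ 2 ∂μ) * ρ ^ (-k) :=
  star_characteristic_second_moment_general μ L hL2 A ρ hρ hAg Φ hΦ m hm hmoment Φstar hΦstar

end
end
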